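/- Upper and lower bounds for posterior vulnerability with respect to parallel composition: let C₁ : X×Y₁ → ℝ and C₂ : X×Y₂ → ℝ be compatible channels, π a prior on X, g : W×X → [0,1] a gain function, and let X' = {x ∈ X : ∃ w ∈ W with π(x)·g(w,x) > 0} (with the convention that a maximum over the empty set equals 0). Then V_g[π, C₁ ∥ C₂] ≥ max(V_g[π,C₁], V_g[π,C₂]), and V_g[π, C₁ ∥ C₂] ≤ min( V_g[π,C₁] · Σ_{y₂∈Y₂} max_{x∈X'} C₂(x,y₂), V_g[π,C₂] · Σ_{y₁∈Y₁} max_{x∈X'} C₁(x,y₁) ). -/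

import Mathlib

/-!
Splitting each column of `C₁` along the rows of `C₂`, which sum to `1`, shows that the adversary
loses nothing by seeing the extra output: the max over actions of a sum is at most the sum of the
maxima. Conversely, in the column `(y₁, y₂)` of `C₁ ∥ C₂` only inputs in `X'` carry gain, so there
the factor `C₂(x, y₂)` may be replaced by its maximum over `X'`; summing over `y₂` gives the upper
bound. The other halves follow by the symmetry `C₁ ∥ C₂ ≐ C₂ ∥ C₁`.
-/

open Finset

/-- A channel with input set `X` and output set `Y`: entries are nonnegative
and each row sums to `1`. -/
def IsChannel {X Y : Type*} [Fintype Y] (C : X → Y → ℝ) : Prop :=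
  (∀ x y, 0 ≤ C x y) ∧ ∀ x, ∑ y, C x y = 1

/-- A channel with input set `X` whose output set is the finset `S` of a common
ambient type `Ω`: entries are nonnegative, each row sums to `1` over `S`, and
entries vanish outside `S`. -/
def IsChannelOn {X Ω : Type*} (S : Finset Ω) (C : X → Ω → ℝ) : Prop :=
  (∀ x y, 0 ≤ C x y) ∧ (∀ x, ∑ y ∈ S, C x y = 1) ∧ ∀ x y, y ∉ S → C x y = 0

/-- Parallel composition `C₁ ∥ C₂`. -/
def par {X Y₁ Y₂ : Type*} (C₁ : X → Y₁ → ℝ) (C₂ : X → Y₂ → ℝ) : X → Y₁ × Y₂ → ℝ :=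
  fun x y => C₁ x y.1 * C₂ x y.2

/-- Visible choice `C₁ ⊞_p C₂`, on the disjoint union of the output sets. -/
def vis {X Y₁ Y₂ : Type*} (p : ℝ) (C₁ : X → Y₁ → ℝ) (C₂ : X → Y₂ → ℝ) : X → Y₁ ⊕ Y₂ → ℝ :=
  fun x => Sum.elim (fun y => p * C₁ x y) (fun y => (1 - p) * C₂ x y)

/-- Hidden choice `C₁ ⊕_p C₂` for channels whose output sets lie in a common
ambient type (pointwise convex combination; this agrees with the case analysis
on `Y₁ ∩ Y₂`, `Y₁ \ Y₂`, `Y₂ \ Y₁` since channels vanish outside their output sets). -/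
def hid {X Ω : Type*} (p : ℝ) (C₁ C₂ : X → Ω → ℝ) : X → Ω → ℝ :=
  fun x y => p * C₁ x y + (1 - p) * C₂ x y

/-- Equality up to a permutation of the output set, `C₁ ≐ C₂`. -/
def PermEq {X Y₁ Y₂ : Type*} (C₁ : X → Y₁ → ℝ) (C₂ : X → Y₂ → ℝ) : Prop :=
  ∃ ψ : Y₁ ≃ Y₂, ∀ x y, C₁ x y = C₂ x (ψ y)

/-- Cascading `CD` of channels. -/
def cascade {X Y Z : Type*} [Fintype Y] (C : X → Y → ℝ) (D : Y → Z → ℝ) : X → Z → ℝ :=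
  fun x z => ∑ y, C x y * D y z

/-- `Refines C₁ C₂` (written `C₁ ⊑ C₂`): there is a channel `D` with `C₁D = C₂`. -/
def Refines {X Y₁ Y₂ : Type*} [Fintype Y₁] [Fintype Y₂] (C₁ : X → Y₁ → ℝ)
    (C₂ : X → Y₂ → ℝ) : Prop :=
  ∃ D : Y₁ → Y₂ → ℝ, IsChannel D ∧ cascade C₁ D = C₂

/-- Equivalence of channels: mutual refinement. -/
def EquivCh {X Y₁ Y₂ : Type*} [Fintype Y₁] [Fintype Y₂] (C₁ : X → Y₁ → ℝ)
    (C₂ : X → Y₂ → ℝ) : Prop :=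
  Refines C₁ C₂ ∧ Refines C₂ C₁

/-- A prior: a probability distribution on the finite input set `X`. -/
def IsPrior {X : Type*} [Fintype X] (π : X → ℝ) : Prop :=
  (∀ x, 0 ≤ π x) ∧ ∑ x, π x = 1

/-- A gain function `g : W × X → [0,1]`. -/
def IsGain {W X : Type*} (g : W → X → ℝ) : Prop :=
  ∀ w x, 0 ≤ g w x ∧ g w x ≤ 1

/-- Posterior g-vulnerability `V_g[π, C]`. -/
noncomputable def postV {W X Y : Type*} [Fintype W] [Nonempty W] [Fintype X] [Fintype Y]
    (π : X → ℝ) (g : W → X → ℝ) (C : X → Y → ℝ) : ℝ :=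
  ∑ y, univ.sup' univ_nonempty fun w => ∑ x, C x y * π x * g w x

open Classical in
/-- The maximum of `f` over `{a | P a}`, with the convention that the maximum
over the empty set is `0`. -/
noncomputable def maxOverP {α : Type*} [Fintype α] (P : α → Prop) (f : α → ℝ) : ℝ :=
  if h : (Finset.univ.filter P).Nonempty then (Finset.univ.filter P).sup' h f else 0

lemma maxOverP_nonneg {α : Type*} [Fintype α] (P : α → Prop) {f : α → ℝ}
    (hf : ∀ a, 0 ≤ f a) : 0 ≤ maxOverP P f := by
  classical
  unfold maxOverP
  split_ifs with h
  · obtain ⟨a, ha⟩ := h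
    exact (hf a).trans (le_sup' f ha)
  · exact le_rfl

lemma le_maxOverP {α : Type*} [Fintype α] {P : α → Prop} (f : α → ℝ) {a : α}
    (ha : P a) : f a ≤ maxOverP P f := by
  classical
  have hmem : a ∈ univ.filter P := by simp [ha]
  rw [maxOverP, dif_pos ⟨a, hmem⟩]
  exact le_sup' f hmem

lemma sum_mul_le_sum_mul_maxOverP {α : Type*} [Fintype α] {P : α → Prop} {a : α → ℝ}
    (ha : ∀ x, 0 ≤ a x) (hP : ∀ x, 0 < a x → P x) (d : α → ℝ) :
    ∑ x, a x * d x ≤ (∑ x, a x) * maxOverP P d := by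
  rw [sum_mul]
  refine sum_le_sum fun x _ => ?_
  rcases (ha x).eq_or_lt with hx | hx
  · simp [← hx]
  · exact mul_le_mul_of_nonneg_left (le_maxOverP d (hP x hx)) hx.le

section columnV

variable {W X : Type*} [Fintype W] [Nonempty W] [Fintype X] (π : X → ℝ) (g : W → X → ℝ)

/-- For a column `c = C(·, y)`, this is `p(y)` times the `g`-vulnerability of the posterior
given `y`. -/
noncomputable def columnV (c : X → ℝ) : ℝ :=
  univ.sup' univ_nonempty fun w => ∑ x, c x * π x * g w x

lemma postV_eq_sum_columnV {Y : Type*} [Fintype Y] (C : X → Y → ℝ) :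
    postV π g C = ∑ y, columnV π g (C · y) :=
  rfl

lemma columnV_sum_le {ι : Type*} (s : Finset ι) (c : ι → X → ℝ) :
    columnV π g (fun x => ∑ i ∈ s, c i x) ≤ ∑ i ∈ s, columnV π g (c i) := by
  refine sup'_le _ _ fun w _ => ?_
  calc ∑ x, (∑ i ∈ s, c i x) * π x * g w x
      = ∑ i ∈ s, ∑ x, c i x * π x * g w x := by
        rw [sum_comm]
        simp only [sum_mul]
    _ ≤ ∑ i ∈ s, columnV π g (c i) :=
        sum_le_sum fun i _ => le_sup' (fun w => ∑ x, c i x * π x * g w x) (mem_univ w)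

lemma columnV_mul_le {c d : X → ℝ} (hc : ∀ x, 0 ≤ c x) (hd : ∀ x, 0 ≤ d x)
    (hπ : ∀ x, 0 ≤ π x) (hg : ∀ w x, 0 ≤ g w x) :
    columnV π g (fun x => c x * d x) ≤
      columnV π g c * maxOverP (fun x => ∃ w, 0 < π x * g w x) d := by
  refine sup'_le _ _ fun w _ => ?_
  have hweight : ∀ x, 0 ≤ c x * π x * g w x := fun x =>
    mul_nonneg (mul_nonneg (hc x) (hπ x)) (hg w x)
  have hsupport : ∀ x, 0 < c x * π x * g w x → ∃ w, 0 < π x * g w x := fun x hx =>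
    ⟨w, pos_of_mul_pos_right (by rwa [mul_assoc] at hx) (hc x)⟩
  calc ∑ x, c x * d x * π x * g w x
      = ∑ x, c x * π x * g w x * d x := sum_congr rfl fun x _ => by ring
    _ ≤ (∑ x, c x * π x * g w x) * maxOverP (fun x => ∃ w, 0 < π x * g w x) d :=
        sum_mul_le_sum_mul_maxOverP hweight hsupport d
    _ ≤ _ := mul_le_mul_of_nonneg_right
        (le_sup' (fun w => ∑ x, c x * π x * g w x) (mem_univ w)) (maxOverP_nonneg _ hd)

end columnV

section parallel

variable {W X Y₁ Y₂ : Type*} [Fintype W] [Nonempty W] [Fintype X] [Fintype Y₁] [Fintype Y₂]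
  (π : X → ℝ) (g : W → X → ℝ) (C₁ : X → Y₁ → ℝ) (C₂ : X → Y₂ → ℝ)

lemma postV_par_eq_sum_sum :
    postV π g (par C₁ C₂) = ∑ y₁, ∑ y₂, columnV π g (fun x => C₁ x y₁ * C₂ x y₂) :=
  Fintype.sum_prod_type _

lemma postV_par_comm : postV π g (par C₁ C₂) = postV π g (par C₂ C₁) := by
  refine Fintype.sum_equiv (Equiv.prodComm Y₁ Y₂) _ _ fun y => ?_
  simp only [par, Equiv.prodComm_apply, Prod.fst_swap, Prod.snd_swap, mul_comm (C₁ _ _)]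

lemma postV_le_postV_par (h₂ : ∀ x, ∑ y, C₂ x y = 1) :
    postV π g C₁ ≤ postV π g (par C₁ C₂) := by
  rw [postV_eq_sum_columnV, postV_par_eq_sum_sum]
  refine sum_le_sum fun y₁ _ => ?_
  have hsplit : (C₁ · y₁) = fun x => ∑ y₂, C₁ x y₁ * C₂ x y₂ := by
    ext x
    rw [← mul_sum, h₂ x, mul_one]
  rw [hsplit]
  exact columnV_sum_le π g univ fun y₂ x => C₁ x y₁ * C₂ x y₂

lemma postV_par_le (h₁ : ∀ x y, 0 ≤ C₁ x y) (h₂ : ∀ x y, 0 ≤ C₂ x y)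
    (hπ : ∀ x, 0 ≤ π x) (hg : ∀ w x, 0 ≤ g w x) :
    postV π g (par C₁ C₂) ≤
      postV π g C₁ * ∑ y₂, maxOverP (fun x => ∃ w, 0 < π x * g w x) (fun x => C₂ x y₂) := by
  rw [postV_par_eq_sum_sum, postV_eq_sum_columnV, sum_mul]
  refine sum_le_sum fun y₁ _ => ?_
  rw [mul_sum]
  exact sum_le_sum fun y₂ _ =>
    columnV_mul_le π g (fun x => h₁ x y₁) (fun x => h₂ x y₂) hπ hg

end parallel

/-- Upper and lower bounds for posterior vulnerability w.r.t. parallel composition. -/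
theorem vulnerability_bounds_parallel {W X Y₁ Y₂ : Type*}
    [Fintype W] [Nonempty W] [Fintype X] [Fintype Y₁] [Fintype Y₂]
    (C₁ : X → Y₁ → ℝ) (C₂ : X → Y₂ → ℝ)
    (h₁ : IsChannel C₁) (h₂ : IsChannel C₂)
    (π : X → ℝ) (hπ : IsPrior π) (g : W → X → ℝ) (hg : IsGain g) :
    max (postV π g C₁) (postV π g C₂) ≤ postV π g (par C₁ C₂) ∧
    postV π g (par C₁ C₂) ≤
      min (postV π g C₁ * ∑ y₂, maxOverP (fun x => ∃ w, 0 < π x * g w x) (fun x => C₂ x y₂))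
          (postV π g C₂ * ∑ y₁, maxOverP (fun x => ∃ w, 0 < π x * g w x) (fun x => C₁ x y₁)) := by
  obtain ⟨h₁_nonneg, h₁_sum⟩ := h₁
  obtain ⟨h₂_nonneg, h₂_sum⟩ := h₂
  have hg_nonneg : ∀ w x, 0 ≤ g w x := fun w x => (hg w x).1
  have hcomm := postV_par_comm π g C₁ C₂
  refine ⟨max_le ?_ ?_, le_min ?_ ?_⟩
  · exact postV_le_postV_par π g C₁ C₂ h₂_sum
  · exact hcomm ▸ postV_le_postV_par π g C₂ C₁ h₁_sum
  · exact postV_par_le π g C₁ C₂ h₁_nonneg h₂_nonneg hπ.1 hg_nonneg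
  · exact hcomm ▸ postV_par_le π g C₂ C₁ h₂_nonneg h₁_nonneg hπ.1 hg_nonneg
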